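/- Let n be a positive integer. Let X, X', Y, Y' be topological spaces, let θ : X → Y and θ' : X' → Y' be continuous, open surjections, and let σ = (σ₁,…,σₙ), τ = (τ₁,…,τₙ), σ̃ = (σ̃₁,…,σ̃ₙ), τ̃ = (τ̃₁,…,τ̃ₙ) be n-tuples of self-maps of X, X', Y, Y' respectively satisfying the intertwining relations θ ∘ σᵢ = σ̃ᵢ ∘ θ and θ' ∘ τᵢ = τ̃ᵢ ∘ θ' for all 1 ≤ i ≤ n. Suppose h : X → X' is a homeomorphism and H : Y → Y' is a homeomorphism with H ∘ θ = θ' ∘ h, and suppose (X, σ) and (X', τ) are piecewise conjugate via h, i.e., there is an open cover { U_g : g ∈ Sₙ } of X' (indexed by the symmetric group Sₙ on n letters) such that τᵢ(y) = h(σ_{g(i)}(h⁻¹(y))) for every y ∈ U_g, every g ∈ Sₙ, and every 1 ≤ i ≤ n. Then (Y, σ̃) and (Y', τ̃) are piecewise conjugate via H: the family { θ'(U_g) : g ∈ Sₙ } is an open cover of Y' and τ̃ᵢ(z) = H(σ̃_{g(i)}(H⁻¹(z))) for every z ∈ θ'(U_g), every g ∈ Sₙ, and every 1 ≤ i ≤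 n. -/

import Mathlib

/-! A point of `θ' '' U g` has the form `θ' y` with `y ∈ U g`, and the relations `θ' ∘ τᵢ = τ̃ᵢ ∘ θ'`,
`θ ∘ σᵢ = σ̃ᵢ ∘ θ` and `H ∘ θ = θ' ∘ h` carry the identity `τᵢ y = h (σ_{g i} (h⁻¹ y))` down to
`τ̃ᵢ (θ' y) = H (σ̃_{g i} (H⁻¹ (θ' y)))`. -/

namespace Equiv

variable {α β γ δ : Type*} {θ : α → β} {θ' : γ → δ} (h : α ≃ γ) (H : β ≃ δ)

theorem symm_apply_of_comp_eq (hcomm : H ∘ θ = θ' ∘ h) (y : γ) :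
    H.symm (θ' y) = θ (h.symm y) := by
  rw [H.symm_apply_eq]
  simpa using (congrFun hcomm (h.symm y)).symm

theorem conj_apply_of_semiconj {σ : α → α} {τ : γ → γ} {σt : β → β} {τt : δ → δ}
    (hσ : θ ∘ σ = σt ∘ θ) (hτ : θ' ∘ τ = τt ∘ θ') (hcomm : H ∘ θ = θ' ∘ h)
    {y : γ} (hy : τ y = h (σ (h.symm y))) :
    τt (θ' y) = H (σt (H.symm (θ' y))) :=
  calc τt (θ' y) = θ' (h (σ (h.symm y))) := by rw [← hy]; exact (congrFun hτ y).symm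
    _ = H (θ (σ (h.symm y))) := (congrFun hcomm _).symm
    _ = H (σt (H.symm (θ' y))) := by
      rw [symm_apply_of_comp_eq h H hcomm]; exact congrArg H (congrFun hσ _)

end Equiv

theorem piecewise_conjugacy_pushforward_general
    {n : ℕ}
    {X X' Y Y' : Type*} [TopologicalSpace X] [TopologicalSpace X']
    [TopologicalSpace Y] [TopologicalSpace Y']
    (θ : X → Y) (θ' : X' → Y')
    (hθ'_open : IsOpenMap θ') (hθ'_surj : Function.Surjective θ')
    (σ : Fin n → X → X) (τ : Fin n → X' → X')
    (σt : Fin n → Y → Y) (τt : Fin n → Y' → Y')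
    (hσ : ∀ i, θ ∘ σ i = σt i ∘ θ)
    (hτ : ∀ i, θ' ∘ τ i = τt i ∘ θ')
    (h : X ≃ₜ X') (H : Y ≃ₜ Y')
    (hcomm : H ∘ θ = θ' ∘ h)
    (U : Equiv.Perm (Fin n) → Set X')
    (hU_open : ∀ g, IsOpen (U g))
    (hU_cover : ⋃ g, U g = Set.univ)
    (hconj : ∀ g : Equiv.Perm (Fin n), ∀ y ∈ U g, ∀ i : Fin n,
      τ i y = h (σ (g i) (h.symm y))) :
    (∀ g, IsOpen (θ' '' U g)) ∧
    (⋃ g, θ' '' U g = Set.univ) ∧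
    (∀ g : Equiv.Perm (Fin n), ∀ z ∈ θ' '' U g, ∀ i : Fin n,
      τt i z = H (σt (g i) (H.symm z))) := by
  refine ⟨fun g => hθ'_open _ (hU_open g), ?_, ?_⟩
  · rw [← Set.image_iUnion, hU_cover, Set.image_univ, hθ'_surj.range_eq]
  · rintro g _ ⟨y, hy, rfl⟩ i
    exact Equiv.conj_apply_of_semiconj h.toEquiv H.toEquiv (hσ (g i)) (hτ i) hcomm
      (hconj g y hy i)

/-- Topological core of the main theorem: piecewise conjugacy pushes forward along
continuous open surjections intertwining the dynamics. -/
theorem piecewise_conjugacy_pushforward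
    {n : ℕ} (hn : 0 < n)
    {X X' Y Y' : Type*} [TopologicalSpace X] [TopologicalSpace X']
    [TopologicalSpace Y] [TopologicalSpace Y']
    (θ : X → Y) (θ' : X' → Y')
    (hθ_cont : Continuous θ) (hθ_open : IsOpenMap θ) (hθ_surj : Function.Surjective θ)
    (hθ'_cont : Continuous θ') (hθ'_open : IsOpenMap θ') (hθ'_surj : Function.Surjective θ')
    (σ : Fin n → X → X) (τ : Fin n → X' → X')
    (σt : Fin n → Y → Y) (τt : Fin n → Y' → Y')
    (hσ : ∀ i, θ ∘ σ i = σt i ∘ θ)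
    (hτ : ∀ i, θ' ∘ τ i = τt i ∘ θ')
    (h : X ≃ₜ X') (H : Y ≃ₜ Y')
    (hcomm : H ∘ θ = θ' ∘ h)
    (U : Equiv.Perm (Fin n) → Set X')
    (hU_open : ∀ g, IsOpen (U g))
    (hU_cover : ⋃ g, U g = Set.univ)
    (hconj : ∀ g : Equiv.Perm (Fin n), ∀ y ∈ U g, ∀ i : Fin n,
      τ i y = h (σ (g i) (h.symm y))) :
    (∀ g, IsOpen (θ' '' U g)) ∧
    (⋃ g, θ' '' U g = Set.univ) ∧
    (∀ g : Equiv.Perm (Fin n), ∀ z ∈ θ' '' U g, ∀ i : Fin n,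
      τt i z = H (σt (g i) (H.symm z))) :=
  piecewise_conjugacy_pushforward_general θ θ' hθ'_open hθ'_surj σ τ σt τt hσ hτ h H hcomm U hU_open
    hU_cover hconj
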